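/- arXiv:1207.6537 — 5 statements merged into one kernel-verified Lean document; each statement's English description precedes it below -/
import Mathlib

section
/- Let (M^j)_{j∈J} and (M̃^j)_{j∈J} be two families of complex D×D matrices, with order-N coefficients c^(N) and c̃^(N) respectively, both defined with respect to the same distinguished index 1. Assume there is an integer p ≥ 2 such that for every k ∈ {1,…,D} there exist an order m ≤ p, a string 𝐣 ∈ J^m, and an index tuple 𝐤 ∈ {1,…,D}^{m−1} having k among its entries, with c^(m)_𝐣(𝐤) ≠ 0. If c^(ℓ)_𝐣(𝐤) = c̃^(ℓ)_𝐣(𝐤) for every order 2 ≤ ℓ ≤ 2p−1, every string 𝐣 ∈ J^ℓ and every tuple 𝐤 ∈ {1,…,D}^{ℓ−1}, then c^(N)_𝐣(𝐤) = c̃^(N)_𝐣(𝐤) for every N ≥ 2, every 𝐣 ∈ J^N and every 𝐤 ∈ {1,…,D}^{N−1}. (Main theorem at the level of coefficients: all higher-order coefficients are determined by those of order at most 2p−1.) -/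
/-- The order-`N` coefficient `c^(N)_𝐣(𝐤)` of a family of `D × D` matrices `(M^j)_{j ∈ J}`
with respect to the distinguished index `0` (the index "1" of the paper):
`c^(N)_𝐣(𝐤) = (M^{j_N})_{1,k_{N−1}} (M^{j_{N−1}})_{k_{N−1},k_{N−2}} ⋯ (M^{j_1})_{k_1,1}`.
Here `j i` is `j_{i+1}` and `k i` is `k_{i+1}` of the paper (0-indexed). -/
def mpsCoeff {D : ℕ} [NeZero D] {J : Type*} (M : J → Matrix (Fin D) (Fin D) ℂ)
    (N : ℕ) (j : ℕ → J) (k : ℕ → Fin D) : ℂ :=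
  ∏ i ∈ Finset.range N,
    M (j i) (if i + 1 = N then 0 else k i) (if i = 0 then 0 else k (i - 1))

lemma mpsCoeff_splice {D : ℕ} [NeZero D] {J : Type*} (M : J → Matrix (Fin D) (Fin D) ℂ)
    (N m t i : ℕ) (j j' : ℕ → J) (k k' : ℕ → Fin D)
    (ht1 : 1 ≤ t) (ht2 : t < N) (him : i + 1 < m) (hki : k' i = k (t - 1)) :
    mpsCoeff M (t + (m - i - 1))
        (fun s => if s < t then j s else j' (i + 1 + (s - t)))
        (fun s => if s < t then k s else k' (i + 1 + (s - t))) *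
      mpsCoeff M ((i + 1) + (N - t))
        (fun s => if s < i + 1 then j' s else j (t + (s - (i + 1))))
        (fun s => if s < i + 1 then k' s else k (t + (s - (i + 1)))) =
      mpsCoeff M N j k * mpsCoeff M m j' k' := by
  unfold mpsCoeff
  rw [Finset.prod_range_add, Finset.prod_range_add]
  conv_rhs => rw [show N = t + (N - t) by omega, show m = (i + 1) + (m - i - 1) by omega,
    Finset.prod_range_add, Finset.prod_range_add]
  have e1 : (∏ s ∈ Finset.range t,
      M ((fun s => if s < t then j s else j' (i + 1 + (s - t))) s)
        (if s + 1 = t + (m - i - 1) then 0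
          else (fun s => if s < t then k s else k' (i + 1 + (s - t))) s)
        (if s = 0 then 0 else (fun s => if s < t then k s else k' (i + 1 + (s - t))) (s - 1))) =
      ∏ s ∈ Finset.range t,
        M (j s) (if s + 1 = t + (N - t) then 0 else k s)
          (if s = 0 then 0 else k (s - 1)) := by
    refine Finset.prod_congr rfl fun s hs => ?_
    rw [Finset.mem_range] at hs
    simp only
    rw [if_neg (by omega : ¬ s + 1 = t + (m - i - 1)),
      if_neg (by omega : ¬ s + 1 = t + (N - t))]
    split_ifs <;> first | rfl | omega
  have e2 : (∏ s ∈ Finset.range (m - i - 1),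
      M ((fun s => if s < t then j s else j' (i + 1 + (s - t))) (t + s))
        (if t + s + 1 = t + (m - i - 1) then 0
          else (fun s => if s < t then k s else k' (i + 1 + (s - t))) (t + s))
        (if t + s = 0 then 0
          else (fun s => if s < t then k s else k' (i + 1 + (s - t))) (t + s - 1))) =
      ∏ s ∈ Finset.range (m - i - 1),
        M (j' (i + 1 + s)) (if i + 1 + s + 1 = i + 1 + (m - i - 1) then 0 else k' (i + 1 + s))
          (if i + 1 + s = 0 then 0 else k' (i + 1 + s - 1)) := by
    refine Finset.prod_congr rfl fun s hs => ?_
    rw [Finset.mem_range] at hs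
    simp only [Nat.add_sub_cancel_left, if_neg (by omega : ¬ t + s < t),
      if_neg (by omega : ¬ t + s = 0), if_neg (by omega : ¬ i + 1 + s = 0)]
    have hb : i + 1 + s - 1 = i + s := by omega
    by_cases h0 : s = 0
    · subst h0
      rw [if_pos (by omega : t + 0 - 1 < t), hb]
      simp only [Nat.add_zero, hki]
      split_ifs <;> first | rfl | omega
    · rw [if_neg (by omega : ¬ t + s - 1 < t),
        (by omega : t + s - 1 - t = s - 1), (by omega : i + 1 + (s - 1) = i + s), hb]
      split_ifs <;> first | rfl | omega
  have e3 : (∏ s ∈ Finset.range (i + 1),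
      M ((fun s => if s < i + 1 then j' s else j (t + (s - (i + 1)))) s)
        (if s + 1 = i + 1 + (N - t) then 0
          else (fun s => if s < i + 1 then k' s else k (t + (s - (i + 1)))) s)
        (if s = 0 then 0
          else (fun s => if s < i + 1 then k' s else k (t + (s - (i + 1)))) (s - 1))) =
      ∏ s ∈ Finset.range (i + 1),
        M (j' s) (if s + 1 = i + 1 + (m - i - 1) then 0 else k' s)
          (if s = 0 then 0 else k' (s - 1)) := by
    refine Finset.prod_congr rfl fun s hs => ?_
    rw [Finset.mem_range] at hs
    simp only
    rw [if_neg (by omega : ¬ s + 1 = i + 1 + (N - t)),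
      if_neg (by omega : ¬ s + 1 = i + 1 + (m - i - 1))]
    split_ifs <;> first | rfl | omega
  have e4 : (∏ s ∈ Finset.range (N - t),
      M ((fun s => if s < i + 1 then j' s else j (t + (s - (i + 1)))) (i + 1 + s))
        (if i + 1 + s + 1 = i + 1 + (N - t) then 0
          else (fun s => if s < i + 1 then k' s else k (t + (s - (i + 1)))) (i + 1 + s))
        (if i + 1 + s = 0 then 0
          else (fun s => if s < i + 1 then k' s else k (t + (s - (i + 1)))) (i + 1 + s - 1))) =
      ∏ s ∈ Finset.range (N - t),
        M (j (t + s)) (if t + s + 1 = t + (N - t) then 0 else k (t + s))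
          (if t + s = 0 then 0 else k (t + s - 1)) := by
    refine Finset.prod_congr rfl fun s hs => ?_
    rw [Finset.mem_range] at hs
    simp only [Nat.add_sub_cancel_left, if_neg (by omega : ¬ i + 1 + s < i + 1),
      if_neg (by omega : ¬ i + 1 + s = 0), if_neg (by omega : ¬ t + s = 0)]
    by_cases h0 : s = 0
    · subst h0
      rw [if_pos (by omega : i + 1 + 0 - 1 < i + 1), (by omega : i + 1 + 0 - 1 = i), hki,
        (by omega : t + 0 - 1 = t - 1)]
      split_ifs <;> first | rfl | omega
    · rw [if_neg (by omega : ¬ i + 1 + s - 1 < i + 1),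
        (by omega : i + 1 + s - 1 - (i + 1) = s - 1), (by omega : t + (s - 1) = t + s - 1)]
      split_ifs <;> first | rfl | omega
  rw [e1, e2, e3, e4]
  ring

/-- **Main theorem at the level of coefficients.**  If for every index `k ∈ {1,…,D}` some
coefficient of order `m ≤ p` with `k` among its indices is nonzero, then agreement of all
coefficients of orders `2 ≤ ℓ ≤ 2p−1` implies agreement of all coefficients of every order
`N ≥ 2`. -/
theorem coeff_determined_of_low_order {D : ℕ} [NeZero D] {J : Type*}
    (M M' : J → Matrix (Fin D) (Fin D) ℂ) (p : ℕ) (hp : 2 ≤ p)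
    (hgen : ∀ k : Fin D, ∃ m ≤ p, ∃ (j : ℕ → J) (kt : ℕ → Fin D),
      (∃ i, i < m - 1 ∧ kt i = k) ∧ mpsCoeff M m j kt ≠ 0)
    (hlow : ∀ ℓ, 2 ≤ ℓ → ℓ ≤ 2 * p - 1 → ∀ (j : ℕ → J) (k : ℕ → Fin D),
      mpsCoeff M ℓ j k = mpsCoeff M' ℓ j k) :
    ∀ N, 2 ≤ N → ∀ (j : ℕ → J) (k : ℕ → Fin D),
      mpsCoeff M N j k = mpsCoeff M' N j k := by
  intro N
  induction N using Nat.strong_induction_on with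
  | _ N IH =>
    intro hN j k
    by_cases hsmall : N ≤ 2 * p - 1
    · exact hlow N hN hsmall j k
    · have hN2p : 2 * p ≤ N := by omega
      obtain ⟨m, hm, j', k', ⟨i, hi, hki⟩, hc⟩ := hgen (k (p - 1))
      have him : i + 1 < m := by omega
      have hs := mpsCoeff_splice M N m p i j j' k k' (by omega) (by omega) him hki
      have hs' := mpsCoeff_splice M' N m p i j j' k k' (by omega) (by omega) him hki
      have hA := hlow (p + (m - i - 1)) (by omega) (by omega)
        (fun s => if s < p then j s else j' (i + 1 + (s - p)))
        (fun s => if s < p then k s else k' (i + 1 + (s - p)))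
      have hB := IH ((i + 1) + (N - p)) (by omega) (by omega)
        (fun s => if s < i + 1 then j' s else j (p + (s - (i + 1))))
        (fun s => if s < i + 1 then k' s else k (p + (s - (i + 1))))
      have hmeq := hlow m (by omega) (by omega) j' k'
      have key : mpsCoeff M N j k * mpsCoeff M m j' k'
          = mpsCoeff M' N j k * mpsCoeff M m j' k' := by
        rw [← hs, hA, hB, hs', hmeq]
      exact mul_right_cancel₀ hc key
end

section
/- Let (E,(M^j)_{j∈J}) and (Ẽ,(M̃^j)_{j∈J}) be two generic MPS data of the same dimension D, with correlation functions C and C̃ respectively. Assume there is an integer p ≥ 2 such that for every eigenvalue μ of E there exist an order m ≤ p, a string 𝐣 ∈ J^m and eigenvalues μ_1,…,μ_{m−1} of E with μ ∈ {μ_1,…,μ_{m−1}} such that Tr(M^{j_m} P_{μ_{m−1}} M^{j_{m−1}} P_{μ_{m−2}} ⋯ P_{μ_1} M^{j_1} P_1) ≠ 0. If C^(ℓ)_𝐣(n) = C̃^(ℓ)_𝐣(n) for all orders 2 ≤ ℓ ≤ 2p−1, all strings 𝐣 ∈ J^ℓ and all separations n ∈ ℕ^{ℓ−1}, then C^(N)_𝐣(n)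 = C̃^(N)_𝐣(n) for all N ≥ 2, all 𝐣 ∈ J^N and all n ∈ ℕ^{N−1}. (A generic translation invariant MPS in the thermodynamic limit with p-number p is completely characterized by its correlation functions of order at most 2p−1.) -/
/-!
Expanding each `E ^ n` in the eigenbasis writes `C^(N)_𝐣(n)` as an exponential polynomial in `n`
whose coefficients are the traces `Tr(M P_{μ_{k_{N-1}}} ⋯ P_{μ_{k_1}} M P_1)`; by Dedekind's
independence of characters, the correlation functions of order `N` determine these coefficients.
Orders `≤ p` then force every eigenvalue of `E` to be an eigenvalue of `Ẽ`, giving a relabelling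
`σ` that fixes the top eigenvalue, and orders `≤ 2p - 1` identify the coefficients up to `σ`.
As every `P_μ = v w†` has rank one, a coefficient is the product of the amplitudes `w_l† M^j v_k`
along a closed walk through the eigenvalue indices. A closed walk of length `N ≥ 2p` is cut at
its `p`-th vertex `k`, and the nonzero loop of length `≤ p` through `k` granted by the `p`-number
condition is spliced in; this trades walk × loop for two closed walks shorter than `N`, so strong
induction identifies the weights of all closed walks, hence all coefficients.
-/

open Matrix

/-- A generic MPS datum of dimension `D` with operator set `J`: a transfer matrix `E` that is
diagonalizable with `D` pairwise distinct eigenvalues (given by a biorthogonal system of right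
eigenvectors `v k` and left eigenvectors `w k`), such that `1` is an eigenvalue (placed at
index `0`) and all other eigenvalues have modulus strictly less than `1`, together with a
family of matrices `(M^j)_{j ∈ J}`. -/
structure GenericMPS (D : ℕ) (J : Type*) [NeZero D] where
  E : Matrix (Fin D) (Fin D) ℂ
  M : J → Matrix (Fin D) (Fin D) ℂ
  μ : Fin D → ℂ
  v : Fin D → Fin D → ℂ
  w : Fin D → Fin D → ℂ
  spec : E = ∑ k : Fin D, μ k • Matrix.vecMulVec (v k) (star (w k))
  ortho : ∀ k l : Fin D, star (w k) ⬝ᵥ v l = if k = l then (1 : ℂ) else 0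
  distinct : Function.Injective μ
  top : μ 0 = 1
  contract : ∀ k : Fin D, k ≠ 0 → ‖μ k‖ < 1

namespace GenericMPS

variable {D : ℕ} [NeZero D] {J : Type*}

/-- The rank-one spectral projector `P_{μ_k} = v_k w_k^†` of `E` at the eigenvalue `μ k`;
`P 0` is the projector `P_1` at the top eigenvalue `1`. -/
noncomputable def P (Ψ : GenericMPS D J) (k : Fin D) : Matrix (Fin D) (Fin D) ℂ :=
  Matrix.vecMulVec (Ψ.v k) (star (Ψ.w k))

/-- The word `M^{j_{r+1}} E^{n_r} M^{j_r} ⋯ M^{j_2} E^{n_1} M^{j_1}` (0-indexed data). -/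
noncomputable def word (Ψ : GenericMPS D J) (j : ℕ → J) (n : ℕ → ℕ) :
    ℕ → Matrix (Fin D) (Fin D) ℂ
  | 0 => Ψ.M (j 0)
  | r + 1 => Ψ.M (j (r + 1)) * Ψ.E ^ n r * Ψ.word j n r

/-- The `N`-point correlation function
`C^(N)_𝐣(𝐧) = Tr(M^{j_N} E^{n_{N−1}} M^{j_{N−1}} ⋯ M^{j_2} E^{n_1} M^{j_1} P_1)`. -/
noncomputable def corr (Ψ : GenericMPS D J) (N : ℕ) (j : ℕ → J) (n : ℕ → ℕ) : ℂ :=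
  (Ψ.word j n (N - 1) * Ψ.P 0).trace

/-- The word `M^{j_{r+1}} P_{μ_{k_r}} M^{j_r} ⋯ M^{j_2} P_{μ_{k_1}} M^{j_1}` in which spectral
projectors are inserted between consecutive operators. -/
noncomputable def pword (Ψ : GenericMPS D J) (j : ℕ → J) (kt : ℕ → Fin D) :
    ℕ → Matrix (Fin D) (Fin D) ℂ
  | 0 => Ψ.M (j 0)
  | r + 1 => Ψ.M (j (r + 1)) * Ψ.P (kt r) * Ψ.pword j kt r

end GenericMPS

open Finset

section PowChar

variable {σ K : Type*} [Fintype σ] [Field K]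

def powChar (t : σ → K) : Multiplicative (σ → ℕ) →* K where
  toFun n := ∏ i, t i ^ n.toAdd i
  map_one' := by simp
  map_mul' n n' := by simp [pow_add, prod_mul_distrib]

theorem powChar_injective : Function.Injective (powChar : (σ → K) → _) := by
  classical
  intro t t' h
  funext i
  simpa [powChar, Pi.single_apply] using DFunLike.congr_fun h (.ofAdd (Pi.single i 1))

theorem sum_fiber_smul_powChar {ι : Type*} [Fintype ι] [DecidableEq K] (ν : ι → σ → K)
    (c : ι → K) {s : Finset (σ → K)} (hs : ∀ k, ν k ∈ s) :
    ∑ t ∈ s, (∑ k with ν k = t, c k) • ⇑(powChar t) =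
      fun n => ∑ k, c k * ∏ i, ν k i ^ n.toAdd i := by
  funext n
  simp only [Finset.sum_apply, Pi.smul_apply, smul_eq_mul, Finset.sum_mul]
  rw [← Finset.sum_fiberwise_of_maps_to (g := ν) (fun k _ => hs k)]
  refine sum_congr rfl fun t _ => sum_congr rfl fun k hk => ?_
  rw [← (mem_filter.1 hk).2]
  rfl

/-- Dedekind's independence of the characters `n ↦ ∏ i, t i ^ n i`. -/
theorem sum_fiber_eq_of_sum_mul_prod_pow_eq {ι ι' : Type*} [Fintype ι] [Fintype ι']
    [DecidableEq K] {ν : ι → σ → K} {ν' : ι' → σ → K} {c : ι → K} {c' : ι' → K}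
    (h : ∀ n : σ → ℕ, ∑ k, c k * ∏ i, ν k i ^ n i = ∑ k, c' k * ∏ i, ν' k i ^ n i)
    (t : σ → K) : ∑ k with ν k = t, c k = ∑ k with ν' k = t, c' k := by
  set s := univ.image ν ∪ univ.image ν'
  by_cases ht : t ∈ s
  · refine sub_eq_zero.1 (linearIndependent_iff'.1
      ((linearIndependent_monoidHom _ K).comp _ powChar_injective) s
      (fun t => ∑ k with ν k = t, c k - ∑ k with ν' k = t, c' k) ?_ t ht)
    simp only [Function.comp_apply, sub_smul, sum_sub_distrib]
    rw [sum_fiber_smul_powChar ν c (fun k => by simp [s]),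
      sum_fiber_smul_powChar ν' c' (fun k => by simp [s]), sub_eq_zero]
    exact funext (h ·.toAdd)
  · rw [sum_eq_zero, sum_eq_zero] <;>
      exact fun k hk => absurd ((mem_filter.1 hk).2 ▸ by simp [s]) ht

end PowChar

section Walks

variable {V J R : Type*}

theorem exists_closedWalk (kt : ℕ → V) (v₀ : V) (r : ℕ) :
    ∃ u : ℕ → V, u 0 = v₀ ∧ u (r + 1) = v₀ ∧ ∀ i < r, u (i + 1) = kt i :=
  ⟨fun i => if i = 0 ∨ r + 1 ≤ i then v₀ else kt (i - 1), by simp, by simp,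
    fun i hi => by simp [show ¬ r + 1 ≤ i + 1 by omega]⟩

section CommMonoid

variable [CommMonoid R]

def pathWeight (F : V → V → J → R) (j : ℕ → J) (u : ℕ → V) (N : ℕ) : R :=
  ∏ i ∈ range N, F (u (i + 1)) (u i) (j i)

def splice {α : Type*} (a : ℕ → α) (p : ℕ) (b : ℕ → α) (q : ℕ) (i : ℕ) : α :=
  if i < p then a i else b (i - p + q)

theorem pathWeight_add (F : V → V → J → R) (j : ℕ → J) (u : ℕ → V) (p d : ℕ) :
    pathWeight F j u (p + d) =
      pathWeight F j u p * pathWeight F (fun i => j (p + i)) (fun i => u (p + i)) d :=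
  prod_range_add _ p d

theorem pathWeight_succ (F : V → V → J → R) (j : ℕ → J) (u : ℕ → V) (N : ℕ) :
    pathWeight F j u (N + 1) = pathWeight F j u N * F (u (N + 1)) (u N) (j N) :=
  prod_range_succ _ N

theorem pathWeight_splice (F : V → V → J → R) {j j' : ℕ → J} {u u' : ℕ → V} {p q : ℕ}
    (h : u p = u' q) (d : ℕ) :
    pathWeight F (splice j p j' q) (splice u p u' q) (p + d) =
      pathWeight F j u p * pathWeight F (fun i => j' (q + i)) (fun i => u' (q + i)) d := by
  rw [pathWeight_add]
  congr 1
  · refine prod_congr rfl fun i hi => ?_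
    have hi : i < p := mem_range.1 hi
    rcases (Nat.succ_le_of_lt hi).lt_or_eq with hi' | hi'
    · simp [splice, hi, hi']
    · subst hi'
      simp [splice, h]
  · simp [pathWeight, splice, add_comm q, add_assoc]

theorem pathWeight_mul_pathWeight_eq (F : V → V → J → R) {j j' : ℕ → J} {u u' : ℕ → V}
    {p q N m : ℕ} (hpN : p ≤ N) (hqm : q ≤ m) (h : u p = u' q) :
    pathWeight F j u N * pathWeight F j' u' m =
      pathWeight F (splice j p j' q) (splice u p u' q) (p + (m - q)) *
        pathWeight F (splice j' q j p) (splice u' q u p) (q + (N - p)) := by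
  obtain ⟨d, rfl⟩ := Nat.exists_eq_add_of_le hpN
  obtain ⟨e, rfl⟩ := Nat.exists_eq_add_of_le hqm
  rw [pathWeight_splice F h, pathWeight_splice F h.symm, pathWeight_add F j u,
    pathWeight_add F j' u', Nat.add_sub_cancel_left, Nat.add_sub_cancel_left]
  ac_rfl

end CommMonoid

section CommMonoidWithZero

variable [CommMonoidWithZero R]

/-- The paper's `p`-number condition, read on walks. -/
def HasNonzeroLoops (F : V → V → J → R) (v₀ : V) (p : ℕ) : Prop :=
  ∀ k, ∃ m ≤ p, ∃ q, 0 < q ∧ q < m ∧ ∃ (j : ℕ → J) (u : ℕ → V),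
    u 0 = v₀ ∧ u m = v₀ ∧ u q = k ∧ pathWeight F j u m ≠ 0

/-- Cut a closed walk of length `N ≥ 2p` at its `p`-th vertex and splice in a nonzero loop through
that vertex: walk × loop = product of two closed walks shorter than `N`, and the loop cancels. -/
theorem pathWeight_eq_of_short_loops [IsCancelMulZero R] {F : V → V → J → R} {v₀ : V} {p : ℕ}
    (hloop : HasNonzeroLoops F v₀ p) (G : V → V → J → R)
    (hshort : ∀ N, 2 ≤ N → N < 2 * p → ∀ j u, u 0 = v₀ → u N = v₀ →
      pathWeight F j u N = pathWeight G j u N)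
    (N : ℕ) (hN : 2 ≤ N) (j : ℕ → J) (u : ℕ → V) (h0 : u 0 = v₀) (hN0 : u N = v₀) :
    pathWeight F j u N = pathWeight G j u N := by
  induction N using Nat.strong_induction_on generalizing j u with
  | _ N ih =>
  rcases lt_or_ge N (2 * p) with hNp | hNp
  · exact hshort N hN hNp j u h0 hN0
  obtain ⟨m, hmp, q, hq, hqm, j', u', h0', hm0', hq', hne⟩ := hloop (u p)
  have hloopG : pathWeight F j' u' m = pathWeight G j' u' m :=
    hshort m (by omega) (by omega) j' u' h0' hm0'
  refine mul_right_cancel₀ hne ?_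
  conv_rhs => rw [hloopG]
  rw [pathWeight_mul_pathWeight_eq F (p := p) (by omega) hqm.le hq'.symm,
    pathWeight_mul_pathWeight_eq G (p := p) (by omega) hqm.le hq'.symm]
  have hp : 0 < p := by omega
  congr 1 <;> apply ih _ (by omega) (by omega) <;>
    simp [splice, Nat.sub_add_cancel hqm.le, Nat.sub_add_cancel (by omega : p ≤ N), *]

end CommMonoidWithZero

end Walks

namespace GenericMPS

variable {D : ℕ} [NeZero D] {J : Type*} (Ψ : GenericMPS D J)

theorem sum_P : ∑ k, Ψ.P k = 1 := by
  let V : Matrix (Fin D) (Fin D) ℂ := .of fun i k => Ψ.v k i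
  let W : Matrix (Fin D) (Fin D) ℂ := .of fun k i => star (Ψ.w k) i
  have hWV : W * V = 1 := by
    ext k l
    simpa [V, W, Matrix.mul_apply, Matrix.one_apply, dotProduct] using Ψ.ortho k l
  calc ∑ k, Ψ.P k = V * W := by
        ext i i'
        simp [P, Matrix.sum_apply, Matrix.mul_apply, Matrix.vecMulVec_apply, V, W]
    _ = 1 := mul_eq_one_comm.mp hWV

theorem P_mul_P (k l : Fin D) : Ψ.P k * Ψ.P l = if k = l then Ψ.P l else 0 := by
  rw [P, P, Matrix.vecMulVec_mul_vecMulVec, Ψ.ortho k l]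
  split_ifs with h <;> simp [h]

theorem E_mul_P (l : Fin D) : Ψ.E * Ψ.P l = Ψ.μ l • Ψ.P l := by
  calc Ψ.E * Ψ.P l = ∑ k, Ψ.μ k • (Ψ.P k * Ψ.P l) := by
        simp_rw [Ψ.spec, Finset.sum_mul, smul_mul_assoc]
        rfl
    _ = Ψ.μ l • Ψ.P l := by simp [P_mul_P]

theorem E_pow_mul_P (n : ℕ) (l : Fin D) : Ψ.E ^ n * Ψ.P l = Ψ.μ l ^ n • Ψ.P l := by
  induction n with
  | zero => simp
  | succ n ih => rw [pow_succ', Matrix.mul_assoc, ih, Matrix.mul_smul, E_mul_P, smul_smul, pow_succ]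

theorem E_pow_eq_sum (n : ℕ) : Ψ.E ^ n = ∑ k, Ψ.μ k ^ n • Ψ.P k := by
  rw [← Matrix.mul_one (Ψ.E ^ n), ← Ψ.sum_P, Finset.mul_sum]
  simp only [E_pow_mul_P]

theorem pword_congr (j : ℕ → J) {kt kt' : ℕ → Fin D} {r : ℕ} (h : ∀ i < r, kt i = kt' i) :
    Ψ.pword j kt r = Ψ.pword j kt' r := by
  induction r with
  | zero => rfl
  | succ r ih => rw [pword, pword, h r r.lt_succ_self, ih fun i hi => h i (by omega)]

noncomputable def spectralCoeff (j : ℕ → J) {r : ℕ} (kt : Fin r → Fin D) : ℂ :=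
  (Ψ.pword j (Function.extend Fin.val kt 0) r * Ψ.P 0).trace

theorem word_mul_P_zero_eq_sum (j : ℕ → J) (n : ℕ → ℕ) (r : ℕ) :
    Ψ.word j n r * Ψ.P 0 = ∑ kt : Fin r → Fin D,
      (∏ i, Ψ.μ (kt i) ^ n i) • (Ψ.pword j (Function.extend Fin.val kt 0) r * Ψ.P 0) := by
  induction r with
  | zero => simp [word, pword]
  | succ r ih =>
    rw [← (Fin.snocEquiv fun _ => Fin D).sum_comp, Fintype.sum_prod_type, word,
      Matrix.mul_assoc, Matrix.mul_assoc, ih, E_pow_eq_sum, Finset.sum_mul, Finset.mul_sum]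
    refine sum_congr rfl fun k _ => ?_
    rw [Finset.mul_sum, Finset.mul_sum]
    refine sum_congr rfl fun kt _ => ?_
    have hlast : Function.extend Fin.val (Fin.snoc kt k : Fin (r + 1) → Fin D) 0 r = k := by
      simpa using
        Fin.val_injective.extend_apply (Fin.snoc kt k : Fin (r + 1) → Fin D) 0 (Fin.last r)
    have hinit : ∀ i < r, Function.extend Fin.val (Fin.snoc kt k : Fin (r + 1) → Fin D) 0 i =
        Function.extend Fin.val kt 0 i := by
      intro i hi
      obtain ⟨i, rfl⟩ : ∃ i' : Fin r, ↑i' = i := ⟨⟨i, hi⟩, rfl⟩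
      rw [Fin.val_injective.extend_apply, ← Fin.val_castSucc, Fin.val_injective.extend_apply,
        Fin.snoc_castSucc]
    rw [show (Fin.snocEquiv fun _ => Fin D) (k, kt) = Fin.snoc kt k from rfl]
    simp only [Fin.prod_univ_castSucc, Fin.snoc_castSucc, Fin.snoc_last,
      Fin.val_castSucc, Fin.val_last, pword, hlast, Ψ.pword_congr j hinit]
    simp only [Matrix.smul_mul, Matrix.mul_smul, smul_smul, Matrix.mul_assoc, mul_comm]

theorem corr_eq_sum (j : ℕ → J) (n : ℕ → ℕ) (r : ℕ) :
    Ψ.corr (r + 1) j n = ∑ kt : Fin r → Fin D, Ψ.spectralCoeff j kt * ∏ i, Ψ.μ (kt i) ^ n i := by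
  simp [corr, word_mul_P_zero_eq_sum, Matrix.trace_sum, spectralCoeff, mul_comm]

noncomputable def amp (l k : Fin D) (x : J) : ℂ := star (Ψ.w l) ⬝ᵥ Ψ.M x *ᵥ Ψ.v k

theorem star_w_dotProduct_pword_mulVec (j : ℕ → J) (kt u : ℕ → Fin D) (r : ℕ)
    (hu : ∀ i < r, u (i + 1) = kt i) (l : Fin D) :
    star (Ψ.w l) ⬝ᵥ Ψ.pword j kt r *ᵥ Ψ.v (u 0) = pathWeight Ψ.amp j u r * Ψ.amp l (u r) (j r) := by
  induction r generalizing l with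
  | zero => simp [pword, pathWeight, amp]
  | succ r ih =>
    rw [pword, ← Matrix.mulVec_mulVec, ← Matrix.mulVec_mulVec, P, Matrix.vecMulVec_mulVec,
      Matrix.mulVec_smul, dotProduct_smul, ← hu r r.lt_succ_self,
      ih (fun i hi => hu i (by omega)), pathWeight_succ, op_smul_eq_smul, smul_eq_mul]
    rfl

/-- The projectors `P k = v_k w_k†` have rank one, so the trace splits into amplitudes along the
closed walk `u = 0, kt 0, …, kt (r - 1), 0`. -/
theorem trace_pword_mul_P_zero (j : ℕ → J) (kt u : ℕ → Fin D) (r : ℕ) (h0 : u 0 = 0)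
    (hr : u (r + 1) = 0) (hu : ∀ i < r, u (i + 1) = kt i) :
    (Ψ.pword j kt r * Ψ.P 0).trace = pathWeight Ψ.amp j u (r + 1) := by
  rw [P, Matrix.mul_vecMulVec, Matrix.trace_vecMulVec, dotProduct_comm, ← h0,
    star_w_dotProduct_pword_mulVec Ψ j kt u r hu, pathWeight_succ, hr, h0]

theorem spectralCoeff_eq_pathWeight (j : ℕ → J) {r : ℕ} (kt : Fin r → Fin D) (u : ℕ → Fin D)
    (h0 : u 0 = 0) (hr : u (r + 1) = 0) (hu : ∀ i : Fin r, u (i + 1) = kt i) :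
    Ψ.spectralCoeff j kt = pathWeight Ψ.amp j u (r + 1) :=
  Ψ.trace_pword_mul_P_zero j _ u r h0 hr fun i hi => by
    rw [hu ⟨i, hi⟩]
    exact (Fin.val_injective.extend_apply kt 0 ⟨i, hi⟩).symm

theorem hasNonzeroLoops_amp {p : ℕ}
    (hgen : ∀ k : Fin D, ∃ m ≤ p, ∃ (j : ℕ → J) (kt : ℕ → Fin D),
      (∃ i, i < m - 1 ∧ kt i = k) ∧ (Ψ.pword j kt (m - 1) * Ψ.P 0).trace ≠ 0) :
    HasNonzeroLoops Ψ.amp 0 p := by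
  intro k
  obtain ⟨m, hmp, j, kt, ⟨i, hi, rfl⟩, hne⟩ := hgen k
  obtain ⟨r, rfl⟩ : ∃ r, m = r + 1 := ⟨m - 1, by omega⟩
  obtain ⟨u, h0, hr, hu⟩ := exists_closedWalk kt 0 r
  rw [Nat.add_sub_cancel, Ψ.trace_pword_mul_P_zero j kt u r h0 hr hu] at hne
  exact ⟨r + 1, hmp, i + 1, by omega, by omega, j, u, h0, hr, hu i (by omega), hne⟩

section Comparison

variable {Ψ Ψ' : GenericMPS D J} {j : ℕ → J} {r : ℕ}

theorem spectralCoeff_eq_sum_fiber (h : ∀ n, Ψ.corr (r + 1) j n = Ψ'.corr (r + 1) j n)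
    (kt : Fin r → Fin D) :
    Ψ.spectralCoeff j kt = ∑ kt' with Ψ'.μ ∘ kt' = Ψ.μ ∘ kt, Ψ'.spectralCoeff j kt' := by
  have hpow (n : Fin r → ℕ) := h fun i => if hi : i < r then n ⟨i, hi⟩ else 0
  simp only [corr_eq_sum, Fin.is_lt, dite_true, Fin.eta] at hpow
  rw [← sum_fiber_eq_of_sum_mul_prod_pow_eq (ν := (Ψ.μ ∘ ·)) (ν' := (Ψ'.μ ∘ ·)) hpow,
    Finset.sum_filter]
  simp [Ψ.distinct.comp_left.eq_iff]

theorem exists_mu_eq_of_pathWeight_ne_zero (h : ∀ n, Ψ.corr (r + 1) j n = Ψ'.corr (r + 1) j n)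
    {u : ℕ → Fin D} (h0 : u 0 = 0) (hr : u (r + 1) = 0) (hne : pathWeight Ψ.amp j u (r + 1) ≠ 0)
    {q : ℕ} (hq : 0 < q) (hqr : q < r + 1) : ∃ k, Ψ'.μ k = Ψ.μ (u q) := by
  obtain ⟨q, rfl⟩ : ∃ q', q = q' + 1 := ⟨q - 1, by omega⟩
  rw [← Ψ.spectralCoeff_eq_pathWeight j (fun i : Fin r => u (i + 1)) u h0 hr fun _ => rfl,
    spectralCoeff_eq_sum_fiber h] at hne
  obtain ⟨kt', hkt', -⟩ := Finset.exists_ne_zero_of_sum_ne_zero hne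
  exact ⟨kt' ⟨q, by omega⟩, congrFun (Finset.mem_filter.1 hkt').2 ⟨q, by omega⟩⟩

theorem exists_perm_mu_eq {p : ℕ} (hloop : HasNonzeroLoops Ψ.amp 0 p)
    (hlow : ∀ ℓ, 2 ≤ ℓ → ℓ ≤ p → ∀ j n, Ψ.corr ℓ j n = Ψ'.corr ℓ j n) :
    ∃ σ : Equiv.Perm (Fin D), σ 0 = 0 ∧ ∀ k, Ψ'.μ (σ k) = Ψ.μ k := by
  have hex : ∀ k, ∃ k', Ψ'.μ k' = Ψ.μ k := by
    intro k
    obtain ⟨m, hmp, q, hq, hqm, j, u, h0, hm, rfl, hne⟩ := hloop k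
    obtain ⟨r, rfl⟩ : ∃ r, m = r + 1 := ⟨m - 1, by omega⟩
    exact exists_mu_eq_of_pathWeight_ne_zero (hlow _ (by omega) (by omega) j) h0 hm hne hq hqm
  choose σ hσ using hex
  have hinj : Function.Injective σ := fun a b hab => Ψ.distinct (by rw [← hσ, ← hσ, hab])
  refine ⟨Equiv.ofBijective σ hinj.bijective_of_finite, ?_, hσ⟩
  by_contra h0
  simpa [hσ, Ψ.top] using Ψ'.contract (σ 0) h0

variable {σ : Fin D → Fin D}

theorem spectralCoeff_eq_of_corr_eq (hσ : ∀ k, Ψ'.μ (σ k) = Ψ.μ k)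
    (h : ∀ n, Ψ.corr (r + 1) j n = Ψ'.corr (r + 1) j n) (kt : Fin r → Fin D) :
    Ψ.spectralCoeff j kt = Ψ'.spectralCoeff j (σ ∘ kt) := by
  have hμ : Ψ.μ ∘ kt = Ψ'.μ ∘ (σ ∘ kt) := funext fun i => (hσ (kt i)).symm
  rw [spectralCoeff_eq_sum_fiber h, Finset.sum_filter]
  simp [hμ, Ψ'.distinct.comp_left.eq_iff]

theorem pathWeight_amp_eq_of_corr_eq (hσ : ∀ k, Ψ'.μ (σ k) = Ψ.μ k) (hσ0 : σ 0 = 0)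
    (h : ∀ n, Ψ.corr (r + 1) j n = Ψ'.corr (r + 1) j n) {u : ℕ → Fin D} (h0 : u 0 = 0)
    (hr : u (r + 1) = 0) :
    pathWeight Ψ.amp j u (r + 1) = pathWeight (fun l k => Ψ'.amp (σ l) (σ k)) j u (r + 1) := by
  rw [← Ψ.spectralCoeff_eq_pathWeight j (fun i : Fin r => u (i + 1)) u h0 hr fun _ => rfl,
    spectralCoeff_eq_of_corr_eq hσ h]
  exact Ψ'.spectralCoeff_eq_pathWeight j _ (σ ∘ u) (by simp [h0, hσ0]) (by simp [hr, hσ0])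
    fun _ => rfl

theorem corr_eq_of_pathWeight_eq (σ : Equiv.Perm (Fin D)) (hσ : ∀ k, Ψ'.μ (σ k) = Ψ.μ k)
    (hσ0 : σ 0 = 0) (h : ∀ u : ℕ → Fin D, u 0 = 0 → u (r + 1) = 0 →
      pathWeight Ψ.amp j u (r + 1) = pathWeight (fun l k => Ψ'.amp (σ l) (σ k)) j u (r + 1))
    (n : ℕ → ℕ) : Ψ.corr (r + 1) j n = Ψ'.corr (r + 1) j n := by
  rw [corr_eq_sum, corr_eq_sum]
  refine Fintype.sum_equiv ((Equiv.refl _).arrowCongr σ) _ _ fun kt => ?_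
  obtain ⟨u, h0, hr, hu⟩ := exists_closedWalk (Function.extend Fin.val kt 0) 0 r
  have hu' (i : Fin r) : u (i + 1) = kt i :=
    (hu i i.is_lt).trans (Fin.val_injective.extend_apply kt 0 i)
  simp only [Equiv.arrowCongr_apply, Equiv.refl_symm, Equiv.coe_refl, Function.comp_id,
    Function.comp_apply, hσ]
  rw [Ψ.spectralCoeff_eq_pathWeight j kt u h0 hr hu', h u h0 hr,
    Ψ'.spectralCoeff_eq_pathWeight j _ (σ ∘ u) (by simp [h0, hσ0]) (by simp [hr, hσ0])
      fun i => by simp [hu']]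
  rfl

end Comparison

end GenericMPS

theorem mps_determined_of_low_order_corr_general {D : ℕ} [NeZero D] {J : Type*}
    (Ψ Ψ' : GenericMPS D J) (p : ℕ)
    (hgen : ∀ k : Fin D, ∃ m ≤ p, ∃ (j : ℕ → J) (kt : ℕ → Fin D),
      (∃ i, i < m - 1 ∧ kt i = k) ∧ (Ψ.pword j kt (m - 1) * Ψ.P 0).trace ≠ 0)
    (hlow : ∀ ℓ, 2 ≤ ℓ → ℓ ≤ 2 * p - 1 → ∀ (j : ℕ → J) (n : ℕ → ℕ),
      Ψ.corr ℓ j n = Ψ'.corr ℓ j n) :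
    ∀ N, 2 ≤ N → ∀ (j : ℕ → J) (n : ℕ → ℕ), Ψ.corr N j n = Ψ'.corr N j n := by
  have hshort : ∀ ℓ, 2 ≤ ℓ → ℓ < 2 * p → ∀ j n, Ψ.corr ℓ j n = Ψ'.corr ℓ j n :=
    fun ℓ h2 hℓ => hlow ℓ h2 (by omega)
  have hloop := Ψ.hasNonzeroLoops_amp hgen
  obtain ⟨σ, hσ0, hσ⟩ :=
    GenericMPS.exists_perm_mu_eq hloop fun ℓ h2 hℓ => hshort ℓ h2 (by omega)
  have hpath := pathWeight_eq_of_short_loops hloop (fun l k => Ψ'.amp (σ l) (σ k))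
    fun N hN hNp j u h0 hN0 => by
      obtain ⟨r, rfl⟩ : ∃ r, N = r + 1 := ⟨N - 1, by omega⟩
      exact GenericMPS.pathWeight_amp_eq_of_corr_eq hσ hσ0 (hshort _ hN hNp j) h0 hN0
  intro N hN j n
  obtain ⟨r, rfl⟩ : ∃ r, N = r + 1 := ⟨N - 1, by omega⟩
  exact GenericMPS.corr_eq_of_pathWeight_eq σ hσ hσ0 (fun u h0 hr => hpath _ hN j u h0 hr) n

/-- **A generic translation invariant MPS with `p`-number `p` is completely characterized by its
correlation functions of order at most `2p−1`.**  If for every eigenvalue `μ k` of `E` some trace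
`Tr(M^{j_m} P_{μ_{k_{m−1}}} ⋯ P_{μ_{k_1}} M^{j_1} P_1)` of order `m ≤ p`, with `k` occurring among
the projector indices, is nonzero, then agreement of all correlation functions of orders
`2 ≤ ℓ ≤ 2p−1` implies agreement of all correlation functions of every order `N ≥ 2`. -/
theorem mps_determined_of_low_order_corr {D : ℕ} [NeZero D] {J : Type*}
    (Ψ Ψ' : GenericMPS D J) (p : ℕ) (hp : 2 ≤ p)
    (hgen : ∀ k : Fin D, ∃ m ≤ p, ∃ (j : ℕ → J) (kt : ℕ → Fin D),
      (∃ i, i < m - 1 ∧ kt i = k) ∧ (Ψ.pword j kt (m - 1) * Ψ.P 0).trace ≠ 0)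
    (hlow : ∀ ℓ, 2 ≤ ℓ → ℓ ≤ 2 * p - 1 → ∀ (j : ℕ → J) (n : ℕ → ℕ),
      Ψ.corr ℓ j n = Ψ'.corr ℓ j n) :
    ∀ N, 2 ≤ N → ∀ (j : ℕ → J) (n : ℕ → ℕ), Ψ.corr N j n = Ψ'.corr N j n :=
  mps_determined_of_low_order_corr_general Ψ Ψ' p hgen hlow
end

section
/- Let (M^j)_{j∈J} be a family of complex D×D matrices with order-N coefficients c^(N) defined with respect to the distinguished index 1. Let N ≥ 3, 𝐣 = (j_1,…,j_N) ∈ J^N and 𝐤 = (k_1,…,k_{N−1}) ∈ {1,…,D}^{N−1}, and assume c^(2)_{(j_m,j_{m+1})}(k_m) ≠ 0 for all 2 ≤ m ≤ N−2. Then the explicit Wick-type formula holds: c^(N)_𝐣(k_1,…,k_{N−1}) = [∏_{i=1}^{N−2} c^(3)_{(j_i,j_{i+1},j_{i+2})}(k_i,k_{i+1})] / [∏_{m=2}^{N−2} c^(2)_{(j_m,j_{m+1})}(k_m)], where c^(2)_{(a,b)}(k) = (M^b)_{1,k}(M^a)_{k,1} and c^(3)_{(a,b,e)}(k,ℓ)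 = (M^e)_{1,ℓ}(M^b)_{ℓ,k}(M^a)_{k,1}. In particular all coefficients of order N are explicit rational functions of the coefficients of orders 2 and 3. -/
/-- The two-point coefficient `c^(2)_{(a,b)}(k) = (M^b)_{1,k} (M^a)_{k,1}`. -/
def c2 {D : ℕ} [NeZero D] {J : Type*} (M : J → Matrix (Fin D) (Fin D) ℂ)
    (a b : J) (k : Fin D) : ℂ :=
  M b 0 k * M a k 0

/-- The three-point coefficient `c^(3)_{(a,b,e)}(k,ℓ) = (M^e)_{1,ℓ} (M^b)_{ℓ,k} (M^a)_{k,1}`. -/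
def c3 {D : ℕ} [NeZero D] {J : Type*} (M : J → Matrix (Fin D) (Fin D) ℂ)
    (a b e : J) (k l : Fin D) : ℂ :=
  M e 0 l * M b l k * M a k 0

lemma mpsCoeff_split {D : ℕ} [NeZero D] {J : Type*} (M : J → Matrix (Fin D) (Fin D) ℂ)
    (n : ℕ) (j : ℕ → J) (k : ℕ → Fin D) :
    mpsCoeff M (n + 3) j k =
      (∏ i ∈ Finset.range (n + 2), M (j i) (k i) (if i = 0 then 0 else k (i - 1))) *
        M (j (n + 2)) 0 (k (n + 1)) := by
  unfold mpsCoeff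
  rw [Finset.prod_range_succ]
  congr 1
  · refine Finset.prod_congr rfl fun i hi => ?_
    have hi' : i < n + 2 := Finset.mem_range.mp hi
    rw [if_neg (by omega)]
  · rw [if_pos rfl, if_neg (by omega : ¬ n + 2 = 0)]
    rfl

lemma key {D : ℕ} [NeZero D] {J : Type*} (M : J → Matrix (Fin D) (Fin D) ℂ)
    (j : ℕ → J) (k : ℕ → Fin D) (n : ℕ) :
    mpsCoeff M (n + 3) j k * ∏ m ∈ Finset.Icc 1 n, c2 M (j m) (j (m + 1)) (k m) =
      ∏ i ∈ Finset.range (n + 1), c3 M (j i) (j (i + 1)) (j (i + 2)) (k i) (k (i + 1)) := by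
  induction n with
  | zero =>
    simp only [Finset.Icc_self, Finset.Icc_eq_empty_of_lt (by norm_num : (1:ℕ) > 0)]
    rw [mpsCoeff_split]
    simp [Finset.prod_range_succ, c3]
    ring
  | succ n ih =>
    have hsplit := mpsCoeff_split M (n + 1) j k
    have hsplit' := mpsCoeff_split M n j k
    have hP : (∏ i ∈ Finset.range (n + 3), M (j i) (k i) (if i = 0 then 0 else k (i - 1))) =
        (∏ i ∈ Finset.range (n + 2), M (j i) (k i) (if i = 0 then 0 else k (i - 1))) *
          M (j (n + 2)) (k (n + 2)) (k (n + 1)) := by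
      rw [Finset.prod_range_succ]
      rw [if_neg (by omega)]
      rfl
    rw [show n + 1 + 3 = n + 1 + 3 from rfl] at hsplit
    rw [Finset.prod_Icc_succ_top (by omega : 1 ≤ n + 1),
      Finset.prod_range_succ, ← ih, hsplit, hsplit', hP]
    simp only [c2, c3]
    ring

/-- **Explicit Wick-type formula**: for `N ≥ 3`, if the two-point coefficients
`c^(2)_{(j_m,j_{m+1})}(k_m)` are nonzero for `2 ≤ m ≤ N−2` (in the paper's 1-indexed
convention, i.e. `1 ≤ m ≤ N−3` in 0-indexed form), then
`c^(N)_𝐣(𝐤) = ∏_{i=1}^{N−2} c^(3)_{(j_i,j_{i+1},j_{i+2})}(k_i,k_{i+1})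
              / ∏_{m=2}^{N−2} c^(2)_{(j_m,j_{m+1})}(k_m)`. -/
theorem coeff_eq_three_point_div_two_point {D : ℕ} [NeZero D] {J : Type*}
    (M : J → Matrix (Fin D) (Fin D) ℂ) (N : ℕ) (hN : 3 ≤ N)
    (j : ℕ → J) (k : ℕ → Fin D)
    (hnz : ∀ m, 1 ≤ m → m ≤ N - 3 → c2 M (j m) (j (m + 1)) (k m) ≠ 0) :
    mpsCoeff M N j k =
      (∏ i ∈ Finset.range (N - 2), c3 M (j i) (j (i + 1)) (j (i + 2)) (k i) (k (i + 1)))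
        / ∏ m ∈ Finset.Icc 1 (N - 3), c2 M (j m) (j (m + 1)) (k m) := by
  obtain ⟨n, rfl⟩ : ∃ n, N = n + 3 := ⟨N - 3, by omega⟩
  simp only [Nat.add_sub_cancel, show n + 3 - 2 = n + 1 from by omega] at hnz ⊢
  have hB : (∏ m ∈ Finset.Icc 1 n, c2 M (j m) (j (m + 1)) (k m)) ≠ 0 :=
    Finset.prod_ne_zero_iff.mpr fun m hm => by
      obtain ⟨h1, h2⟩ := Finset.mem_Icc.mp hm
      exact hnz m h1 h2
  rw [eq_div_iff hB]
  exact key M j k n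
end

section
/- Let (E,(M^j)_{j∈J}) and (Ẽ,(M̃^j)_{j∈J}) be two generic MPS data of the same dimension D, with correlation functions C and C̃. Assume that for every eigenvalue μ of E there exist a, b ∈ J with Tr(M^b P_μ M^a P_1) ≠ 0. If C^(2)_{(a,b)}(n) = C̃^(2)_{(a,b)}(n) for all a,b ∈ J and n ∈ ℕ, and C^(3)_{(a,b,e)}(n_1,n_2) = C̃^(3)_{(a,b,e)}(n_1,n_2) for all a,b,e ∈ J and (n_1,n_2) ∈ ℕ², then C^(N)_𝐣(n) = C̃^(N)_𝐣(n) for all N ≥ 2, all strings 𝐣 ∈ J^N and all n ∈ ℕ^{N−1}. (Wick's theorem for matrix product states: generically, all N-point functions of a translation invariant MPS are completely determined by its two- and three-point functions.) -/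
/-!
In the biorthogonal eigenbasis of `E` (matrix elements `M^a_{kl} = w_k^† M^a v_l`), every
correlation function is a power sum `∑ₖ cₖ μₖ ^ n` in each separation, and such power sums
determine their coefficients (Vandermonde). The two-point functions therefore match the spectra
of the two transfer matrices by a bijection `g` (genericity makes every eigenvalue visible in
some two-point function) and identify the weights `M^b_{0k} M^a_{k0}`; the three-point functions
identify `M^e_{0l} M^b_{lk} M^a_{k0}`. For a word `Wᵣ` one then shows by induction on `r` that
`M^e_{0l} (Wᵣ)_{l0}` is invariant: expanding `W_{r+1} = M^j E^p Wᵣ`, the term through `m`,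
multiplied by a nonzero weight `M^b_{0m} M^a_{m0}`, factors as the three-point coefficient
`M^e_{0l} M^j_{lm} M^a_{m0}` times `M^b_{0m} (Wᵣ)_{m0}`.
-/

open Matrix

open Finset

section PowerSums

theorem sum_mul_pow_eq_sum_fiberwise {R ι : Type*} [CommSemiring R] [DecidableEq R] [Fintype ι]
    (s : Finset R) {μ : ι → R} (hμ : ∀ i, μ i ∈ s) (c : ι → R) (n : ℕ) :
    ∑ i, c i * μ i ^ n = ∑ z ∈ s, (∑ i with μ i = z, c i) * z ^ n := by
  rw [← sum_fiberwise_of_maps_to (fun i _ => hμ i)]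
  refine sum_congr rfl fun z _ => ?_
  rw [sum_mul]
  exact sum_congr rfl fun i hi => by rw [(mem_filter.mp hi).2]

variable {R : Type*} [CommRing R] [IsDomain R]

theorem eq_zero_of_forall_sum_mul_pow_eq_zero {ι : Type*} [Fintype ι] {μ : ι → R}
    (hμ : Function.Injective μ) {c : ι → R} (h : ∀ n : ℕ, ∑ i, c i * μ i ^ n = 0) : c = 0 := by
  let e := Fintype.equivFin ι
  have hc : c ∘ e.symm = 0 :=
    Matrix.eq_zero_of_forall_pow_sum_mul_pow_eq_zero (hμ.comp e.symm.injective) fun n => by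
      simpa only [Function.comp_apply, e.symm.sum_comp (fun i => c i * μ i ^ (n : ℕ))] using h n
  funext i
  simpa using congrFun hc (e i)

theorem eq_of_forall_sum_mul_pow_eq {ι : Type*} [Fintype ι] {μ : ι → R}
    (hμ : Function.Injective μ) {c d : ι → R}
    (h : ∀ n : ℕ, ∑ i, c i * μ i ^ n = ∑ i, d i * μ i ^ n) : c = d :=
  sub_eq_zero.mp <| eq_zero_of_forall_sum_mul_pow_eq_zero hμ fun n => by
    simp only [Pi.sub_apply, sub_mul, sum_sub_distrib, h n, sub_self]

variable [DecidableEq R] {ι ι' : Type*} [Fintype ι] [Fintype ι']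

theorem sum_fiberwise_eq_of_forall_sum_mul_pow_eq {μ : ι → R} {ν : ι' → R} {c : ι → R}
    {d : ι' → R} (h : ∀ n : ℕ, ∑ i, c i * μ i ^ n = ∑ i, d i * ν i ^ n) (z : R) :
    ∑ i with μ i = z, c i = ∑ i with ν i = z, d i := by
  let s := univ.image μ ∪ univ.image ν
  have hμ (i : ι) : μ i ∈ s := mem_union_left _ (mem_image_of_mem μ (mem_univ i))
  have hν (i : ι') : ν i ∈ s := mem_union_right _ (mem_image_of_mem ν (mem_univ i))
  by_cases hz : z ∈ s
  · have := eq_of_forall_sum_mul_pow_eq (μ := ((↑) : s → R)) Subtype.val_injective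
      (c := fun z => ∑ i with μ i = z, c i) (d := fun z => ∑ i with ν i = z, d i) fun n => by
        rw [sum_coe_sort s fun z => (∑ i with μ i = z, c i) * z ^ n,
          sum_coe_sort s fun z => (∑ i with ν i = z, d i) * z ^ n,
          ← sum_mul_pow_eq_sum_fiberwise s hμ, ← sum_mul_pow_eq_sum_fiberwise s hν, h n]
    exact congrFun this ⟨z, hz⟩
  · rw [filter_false_of_mem fun i _ (hi : μ i = z) => hz (hi ▸ hμ i),
      filter_false_of_mem fun i _ (hi : ν i = z) => hz (hi ▸ hν i), sum_empty, sum_empty]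

theorem exists_eq_of_forall_sum_mul_pow_eq {μ : ι → R} (hμ : Function.Injective μ) {ν : ι' → R}
    {c : ι → R} {d : ι' → R} (h : ∀ n : ℕ, ∑ i, c i * μ i ^ n = ∑ i, d i * ν i ^ n) {k : ι}
    (hk : c k ≠ 0) : ∃ i, ν i = μ k := by
  by_contra! hne
  have := sum_fiberwise_eq_of_forall_sum_mul_pow_eq h (μ k)
  have hfiber : ({i | μ i = μ k} : Finset ι) = {k} := by ext; simp [hμ.eq_iff]
  rw [hfiber, sum_singleton, filter_false_of_mem fun i _ => hne i, sum_empty] at this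
  exact hk this

end PowerSums

namespace GenericMPS

variable {D : ℕ} [NeZero D] {J : Type*} (Ψ : GenericMPS D J)

def V : Matrix (Fin D) (Fin D) ℂ := of fun i k => Ψ.v k i

def W : Matrix (Fin D) (Fin D) ℂ := of fun k i => star (Ψ.w k i)

def toEigenbasis (X : Matrix (Fin D) (Fin D) ℂ) : Matrix (Fin D) (Fin D) ℂ := Ψ.W * X * Ψ.V

theorem W_mul_V : Ψ.W * Ψ.V = 1 := by
  ext k l
  simpa [W, V, mul_apply, one_apply, dotProduct] using Ψ.ortho k l

theorem P_eq (k : Fin D) : Ψ.P k = Ψ.V * single k k 1 * Ψ.W := by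
  rw [single_eq_single_vecMulVec_single, mul_vecMulVec, vecMulVec_mul, mulVec_single_one,
    single_one_vecMul]
  rfl

theorem E_eq : Ψ.E = Ψ.V * diagonal Ψ.μ * Ψ.W := by
  ext i j
  rw [mul_apply]
  simp only [Ψ.spec, Matrix.sum_apply, Matrix.smul_apply, vecMulVec_apply, Pi.star_apply, smul_eq_mul, V,
    W, mul_diagonal, of_apply]
  exact sum_congr rfl fun k _ => by ring

theorem E_pow (p : ℕ) : Ψ.E ^ p = Ψ.V * diagonal (fun k => Ψ.μ k ^ p) * Ψ.W := by
  induction p with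
  | zero => simp [mul_eq_one_comm.mp Ψ.W_mul_V]
  | succ p ih =>
    have hdiag : diagonal (fun k => Ψ.μ k ^ (p + 1))
        = diagonal (fun k => Ψ.μ k ^ p) * diagonal Ψ.μ := by
      simp only [diagonal_mul_diagonal, pow_succ]
    rw [pow_succ, ih, E_eq, hdiag]
    simp only [Matrix.mul_assoc, ← Matrix.mul_assoc Ψ.W Ψ.V, W_mul_V, Matrix.one_mul]

theorem toEigenbasis_mul_E_pow_mul (X Y : Matrix (Fin D) (Fin D) ℂ) (p : ℕ) :
    Ψ.toEigenbasis (X * Ψ.E ^ p * Y)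
      = Ψ.toEigenbasis X * diagonal (fun k => Ψ.μ k ^ p) * Ψ.toEigenbasis Y := by
  simp only [toEigenbasis, E_pow, Matrix.mul_assoc]

theorem toEigenbasis_mul_P_mul (X Y : Matrix (Fin D) (Fin D) ℂ) (k : Fin D) :
    Ψ.toEigenbasis (X * Ψ.P k * Y)
      = Ψ.toEigenbasis X * single k k 1 * Ψ.toEigenbasis Y := by
  simp only [toEigenbasis, P_eq, Matrix.mul_assoc]

theorem trace_mul_P (X : Matrix (Fin D) (Fin D) ℂ) (k : Fin D) :
    (X * Ψ.P k).trace = Ψ.toEigenbasis X k k := by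
  rw [P_eq, ← Matrix.mul_assoc, trace_mul_cycle, ← Matrix.mul_assoc, trace_mul_single]
  simp [toEigenbasis]

theorem trace_M_mul_P_mul_M_mul_P_zero (a b : J) (k : Fin D) :
    (Ψ.M b * Ψ.P k * Ψ.M a * Ψ.P 0).trace
      = Ψ.toEigenbasis (Ψ.M b) 0 k * Ψ.toEigenbasis (Ψ.M a) k 0 := by
  rw [trace_mul_P, toEigenbasis_mul_P_mul]
  simp [mul_apply, single_apply, ite_and]

theorem toEigenbasis_word_succ_apply (j : ℕ → J) (n : ℕ → ℕ) (r : ℕ) (k i : Fin D) :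
    Ψ.toEigenbasis (Ψ.word j n (r + 1)) k i
      = ∑ l, Ψ.toEigenbasis (Ψ.M (j (r + 1))) k l * Ψ.μ l ^ n r
          * Ψ.toEigenbasis (Ψ.word j n r) l i := by
  rw [word, toEigenbasis_mul_E_pow_mul, mul_apply]
  simp only [mul_diagonal]

theorem corr_eq (N : ℕ) (j : ℕ → J) (n : ℕ → ℕ) :
    Ψ.corr N j n = Ψ.toEigenbasis (Ψ.word j n (N - 1)) 0 0 :=
  Ψ.trace_mul_P _ 0

theorem corr_two_eq_sum (a b : J) (p : ℕ) :
    Ψ.corr 2 (fun i => if i = 0 then a else b) (fun _ => p)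
      = ∑ l, Ψ.toEigenbasis (Ψ.M b) 0 l * Ψ.toEigenbasis (Ψ.M a) l 0 * Ψ.μ l ^ p := by
  rw [corr_eq, toEigenbasis_word_succ_apply]
  simp [word, mul_right_comm]

theorem corr_three_eq_sum (a b e : J) (p q : ℕ) :
    Ψ.corr 3 (fun i => if i = 0 then a else if i = 1 then b else e)
        (fun i => if i = 0 then p else q)
      = ∑ l, (∑ m, Ψ.toEigenbasis (Ψ.M e) 0 l * Ψ.toEigenbasis (Ψ.M b) l m
          * Ψ.toEigenbasis (Ψ.M a) m 0 * Ψ.μ m ^ p) * Ψ.μ l ^ q := by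
  rw [corr_eq, show 3 - 1 = 0 + 1 + 1 from rfl, toEigenbasis_word_succ_apply]
  simp only [toEigenbasis_word_succ_apply, mul_sum, sum_mul]
  refine sum_congr rfl fun l _ => sum_congr rfl fun m _ => ?_
  simp only [word, Nat.succ_ne_zero, if_true, if_false, Nat.reduceEqDiff]
  ring

section Comparison

variable {Ψ Ψ' : GenericMPS D J}

theorem exists_equiv_μ_comp_eq
    (hgen : ∀ k, ∃ a b : J, Ψ.toEigenbasis (Ψ.M b) 0 k * Ψ.toEigenbasis (Ψ.M a) k 0 ≠ 0)
    (h2 : ∀ (j : ℕ → J) (n : ℕ → ℕ), Ψ.corr 2 j n = Ψ'.corr 2 j n) :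
    ∃ g : Fin D ≃ Fin D, ∀ k, Ψ'.μ (g k) = Ψ.μ k := by
  have hex (k : Fin D) : ∃ k', Ψ'.μ k' = Ψ.μ k := by
    obtain ⟨a, b, hab⟩ := hgen k
    refine exists_eq_of_forall_sum_mul_pow_eq Ψ.distinct
      (c := fun k => Ψ.toEigenbasis (Ψ.M b) 0 k * Ψ.toEigenbasis (Ψ.M a) k 0)
      (d := fun k => Ψ'.toEigenbasis (Ψ'.M b) 0 k * Ψ'.toEigenbasis (Ψ'.M a) k 0)
      (fun p => ?_) hab
    rw [← corr_two_eq_sum, h2, corr_two_eq_sum]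
  choose g hg using hex
  have hinj : Function.Injective g := fun k l hkl => Ψ.distinct (by rw [← hg k, ← hg l, hkl])
  exact ⟨Equiv.ofBijective g (Finite.injective_iff_bijective.mp hinj), hg⟩

theorem sum_mul_μ_pow_comp_equiv (g : Fin D ≃ Fin D) (hg : ∀ k, Ψ'.μ (g k) = Ψ.μ k)
    (c : Fin D → ℂ) (p : ℕ) : ∑ k, c k * Ψ'.μ k ^ p = ∑ k, c (g k) * Ψ.μ k ^ p := by
  rw [← g.sum_comp]
  simp only [hg]

theorem two_point_coeff_eq (g : Fin D ≃ Fin D) (hg : ∀ k, Ψ'.μ (g k) = Ψ.μ k)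
    (h2 : ∀ (j : ℕ → J) (n : ℕ → ℕ), Ψ.corr 2 j n = Ψ'.corr 2 j n) (a b : J) (k : Fin D) :
    Ψ.toEigenbasis (Ψ.M b) 0 k * Ψ.toEigenbasis (Ψ.M a) k 0
      = Ψ'.toEigenbasis (Ψ'.M b) 0 (g k) * Ψ'.toEigenbasis (Ψ'.M a) (g k) 0 := by
  refine congrFun (eq_of_forall_sum_mul_pow_eq Ψ.distinct
    (c := fun k => Ψ.toEigenbasis (Ψ.M b) 0 k * Ψ.toEigenbasis (Ψ.M a) k 0)
    (d := fun k => Ψ'.toEigenbasis (Ψ'.M b) 0 (g k) * Ψ'.toEigenbasis (Ψ'.M a) (g k) 0)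
    fun p => ?_) k
  rw [← corr_two_eq_sum, h2, corr_two_eq_sum, sum_mul_μ_pow_comp_equiv g hg]

theorem three_point_coeff_eq (g : Fin D ≃ Fin D) (hg : ∀ k, Ψ'.μ (g k) = Ψ.μ k)
    (h3 : ∀ (j : ℕ → J) (n : ℕ → ℕ), Ψ.corr 3 j n = Ψ'.corr 3 j n) (a b e : J) (k l : Fin D) :
    Ψ.toEigenbasis (Ψ.M e) 0 l * Ψ.toEigenbasis (Ψ.M b) l k * Ψ.toEigenbasis (Ψ.M a) k 0
      = Ψ'.toEigenbasis (Ψ'.M e) 0 (g l) * Ψ'.toEigenbasis (Ψ'.M b) (g l) (g k)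
          * Ψ'.toEigenbasis (Ψ'.M a) (g k) 0 := by
  have hinner (p : ℕ) := eq_of_forall_sum_mul_pow_eq Ψ.distinct
    (c := fun l => ∑ m, Ψ.toEigenbasis (Ψ.M e) 0 l * Ψ.toEigenbasis (Ψ.M b) l m
      * Ψ.toEigenbasis (Ψ.M a) m 0 * Ψ.μ m ^ p)
    (d := fun l => ∑ m, Ψ'.toEigenbasis (Ψ'.M e) 0 (g l) * Ψ'.toEigenbasis (Ψ'.M b) (g l) (g m)
      * Ψ'.toEigenbasis (Ψ'.M a) (g m) 0 * Ψ.μ m ^ p)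
    fun q => by
      rw [← corr_three_eq_sum _ a b e p q, h3, corr_three_eq_sum, sum_mul_μ_pow_comp_equiv g hg]
      simp only [sum_mul_μ_pow_comp_equiv g hg]
  exact congrFun (eq_of_forall_sum_mul_pow_eq Ψ.distinct
    (c := fun k => Ψ.toEigenbasis (Ψ.M e) 0 l * Ψ.toEigenbasis (Ψ.M b) l k
      * Ψ.toEigenbasis (Ψ.M a) k 0)
    (d := fun k => Ψ'.toEigenbasis (Ψ'.M e) 0 (g l) * Ψ'.toEigenbasis (Ψ'.M b) (g l) (g k)
      * Ψ'.toEigenbasis (Ψ'.M a) (g k) 0)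
    fun p => congrFun (hinner p) l) k

theorem toEigenbasis_M_mul_word_eq (g : Fin D ≃ Fin D) (hg : ∀ k, Ψ'.μ (g k) = Ψ.μ k)
    (hgen : ∀ k, ∃ a b : J, Ψ.toEigenbasis (Ψ.M b) 0 k * Ψ.toEigenbasis (Ψ.M a) k 0 ≠ 0)
    (h2 : ∀ (j : ℕ → J) (n : ℕ → ℕ), Ψ.corr 2 j n = Ψ'.corr 2 j n)
    (h3 : ∀ (j : ℕ → J) (n : ℕ → ℕ), Ψ.corr 3 j n = Ψ'.corr 3 j n)
    (j : ℕ → J) (n : ℕ → ℕ) (r : ℕ) (e : J) (l : Fin D) :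
    Ψ.toEigenbasis (Ψ.M e) 0 l * Ψ.toEigenbasis (Ψ.word j n r) l 0
      = Ψ'.toEigenbasis (Ψ'.M e) 0 (g l) * Ψ'.toEigenbasis (Ψ'.word j n r) (g l) 0 := by
  induction r generalizing e l with
  | zero => exact two_point_coeff_eq g hg h2 (j 0) e l
  | succ r ih =>
    rw [toEigenbasis_word_succ_apply, toEigenbasis_word_succ_apply, mul_sum, mul_sum]
    refine Fintype.sum_equiv g _ _ fun m => ?_
    obtain ⟨a, b, hab⟩ := hgen m
    refine mul_right_cancel₀ hab ?_
    calc Ψ.toEigenbasis (Ψ.M e) 0 l * (Ψ.toEigenbasis (Ψ.M (j (r + 1))) l m * Ψ.μ m ^ n r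
            * Ψ.toEigenbasis (Ψ.word j n r) m 0)
            * (Ψ.toEigenbasis (Ψ.M b) 0 m * Ψ.toEigenbasis (Ψ.M a) m 0)
        = Ψ.μ m ^ n r * (Ψ.toEigenbasis (Ψ.M e) 0 l * Ψ.toEigenbasis (Ψ.M (j (r + 1))) l m
            * Ψ.toEigenbasis (Ψ.M a) m 0)
            * (Ψ.toEigenbasis (Ψ.M b) 0 m * Ψ.toEigenbasis (Ψ.word j n r) m 0) := by ring
      _ = Ψ.μ m ^ n r * (Ψ'.toEigenbasis (Ψ'.M e) 0 (g l)
            * Ψ'.toEigenbasis (Ψ'.M (j (r + 1))) (g l) (g m) * Ψ'.toEigenbasis (Ψ'.M a) (g m) 0)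
            * (Ψ'.toEigenbasis (Ψ'.M b) 0 (g m) * Ψ'.toEigenbasis (Ψ'.word j n r) (g m) 0) := by
          rw [three_point_coeff_eq g hg h3, ih]
      _ = Ψ'.toEigenbasis (Ψ'.M e) 0 (g l) * (Ψ'.toEigenbasis (Ψ'.M (j (r + 1))) (g l) (g m)
            * Ψ'.μ (g m) ^ n r * Ψ'.toEigenbasis (Ψ'.word j n r) (g m) 0)
            * (Ψ'.toEigenbasis (Ψ'.M b) 0 (g m) * Ψ'.toEigenbasis (Ψ'.M a) (g m) 0) := by
          rw [hg]; ring
      _ = _ := by rw [two_point_coeff_eq g hg h2]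

end Comparison

end GenericMPS

/-- **Wick's theorem for matrix product states.**  For a generic translation invariant MPS such
that for every eigenvalue `μ k` of `E` there are operators `a, b ∈ J` with
`Tr(M^b P_{μ_k} M^a P_1) ≠ 0`, agreement of all two-point functions `C^(2)` and all three-point
functions `C^(3)` implies agreement of all `N`-point correlation functions for every `N ≥ 2`:
generically, all higher correlation functions are completely determined by the two- and
three-point functions. -/
theorem mps_wick_two_three_point {D : ℕ} [NeZero D] {J : Type*}
    (Ψ Ψ' : GenericMPS D J)
    (hgen : ∀ k : Fin D, ∃ a b : J, (Ψ.M b * Ψ.P k * Ψ.M a * Ψ.P 0).trace ≠ 0)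
    (h2 : ∀ (j : ℕ → J) (n : ℕ → ℕ), Ψ.corr 2 j n = Ψ'.corr 2 j n)
    (h3 : ∀ (j : ℕ → J) (n : ℕ → ℕ), Ψ.corr 3 j n = Ψ'.corr 3 j n) :
    ∀ N, 2 ≤ N → ∀ (j : ℕ → J) (n : ℕ → ℕ), Ψ.corr N j n = Ψ'.corr N j n := by
  simp only [GenericMPS.trace_M_mul_P_mul_M_mul_P_zero] at hgen
  obtain ⟨g, hg⟩ := GenericMPS.exists_equiv_μ_comp_eq hgen h2
  intro N hN j n
  obtain ⟨r, rfl⟩ : ∃ r, N = r + 1 + 1 := ⟨N - 2, by omega⟩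
  rw [GenericMPS.corr_eq, GenericMPS.corr_eq, Nat.add_sub_cancel,
    GenericMPS.toEigenbasis_word_succ_apply, GenericMPS.toEigenbasis_word_succ_apply]
  refine Fintype.sum_equiv g _ _ fun l => ?_
  rw [hg, mul_right_comm, mul_right_comm (Ψ'.toEigenbasis _ _ _),
    GenericMPS.toEigenbasis_M_mul_word_eq g hg hgen h2 h3]
end

section
/- Let (M^j)_{j∈J} be a family of complex D×D matrices with coefficients c^(N), and let p ≥ 2 be such that for every k ∈ {1,…,D} there is a fixed choice of an order m_k ≤ p, a string 𝐣(k) ∈ J^{m_k}, and an index tuple containing k, whose coefficient γ_k := c^{(m_k)}_{𝐣(k)}(…,k,…) is nonzero. Then for every N ≥ 2, every 𝐣 ∈ J^N and every 𝐤 = (k_1,…,k_{N−1}) ∈ {1,…,D}^{N−1}, there exist orders ℓ_1,…,ℓ_N with ℓ_1 ≤ p, ℓ_N ≤ p, and ℓ_r ≤ 2p−1 for all r, together with strings 𝐣^{(r)} ∈ J^{ℓ_r} and index tuples 𝐤^{(r)} ∈ {1,…,D}^{ℓ_r−1}, such that c^(N)_𝐣(𝐤) · ∏_{i=1}^{N−1}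 γ_{k_i} = ∏_{r=1}^{N} c^{(ℓ_r)}_{𝐣^{(r)}}(𝐤^{(r)}). (The identity-insertion decomposition, Eqs. (16)–(18): every coefficient, after multiplication by the chosen nonzero normalizing coefficients, factors into coefficients of order at most 2p−1.) -/
def seg {D : ℕ} [NeZero D] {J : Type*} (M : J → Matrix (Fin D) (Fin D) ℂ)
    (x y : Fin D) (n : ℕ) (j : ℕ → J) (k : ℕ → Fin D) : ℂ :=
  ∏ i ∈ Finset.range n,
    M (j i) (if i + 1 = n then y else k i) (if i = 0 then x else k (i - 1))

lemma mpsCoeff_eq_seg {D : ℕ} [NeZero D] {J : Type*} (M : J → Matrix (Fin D) (Fin D) ℂ)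
    (n : ℕ) (j : ℕ → J) (k : ℕ → Fin D) : mpsCoeff M n j k = seg M 0 0 n j k := rfl

lemma seg_congr {D : ℕ} [NeZero D] {J : Type*} {M : J → Matrix (Fin D) (Fin D) ℂ}
    {x y : Fin D} {n : ℕ} {j j' : ℕ → J} {k k' : ℕ → Fin D}
    (hj : ∀ i, i < n → j i = j' i) (hk : ∀ i, i + 1 < n → k i = k' i) :
    seg M x y n j k = seg M x y n j' k' := by
  unfold seg
  refine Finset.prod_congr rfl fun i hi => ?_
  simp only [Finset.mem_range] at hi
  rw [hj i hi]
  congr 1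
  · split_ifs with h
    · rfl
    · exact hk i (by omega)
  · split_ifs with h
    · rfl
    · exact hk (i - 1) (by omega)

lemma seg_one {D : ℕ} [NeZero D] {J : Type*} (M : J → Matrix (Fin D) (Fin D) ℂ)
    (x y : Fin D) (j : ℕ → J) (k : ℕ → Fin D) : seg M x y 1 j k = M (j 0) y x := by
  simp [seg]

lemma seg_split {D : ℕ} [NeZero D] {J : Type*} (M : J → Matrix (Fin D) (Fin D) ℂ)
    {x y c : Fin D} {s n : ℕ} {j : ℕ → J} {k : ℕ → Fin D}
    (hs : 0 < s) (hsn : s < n) (hc : k (s - 1) = c) :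
    seg M x y n j k =
      seg M x c s j k * seg M c y (n - s) (fun t => j (s + t)) (fun t => k (s + t)) := by
  obtain ⟨t, rfl⟩ := Nat.exists_eq_add_of_le hsn.le
  have ht : 0 < t := by omega
  have hst : s + t - s = t := by omega
  rw [hst]
  unfold seg
  rw [Finset.prod_range_add]
  congr 1
  · refine Finset.prod_congr rfl fun i hi => ?_
    simp only [Finset.mem_range] at hi
    congr 1
    · have h1 : ¬ (i + 1 = s + t) := by omega
      rw [if_neg h1]
      split_ifs with h2
      · rw [show i = s - 1 by omega, hc]
      · rfl
  · refine Finset.prod_congr rfl fun i hi => ?_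
    simp only [Finset.mem_range] at hi
    congr 1
    · split_ifs with h1 h2 h2 <;> first | rfl | omega
    · have h1 : ¬ (s + i = 0) := by omega
      rw [if_neg h1]
      split_ifs with h2
      · subst h2; rw [show s + 0 - 1 = s - 1 by omega, hc]
      · congr 1; omega

/-- **Identity-insertion decomposition** (Eqs. (16)–(18) of the paper).  Suppose that for every
`k ∈ {1,…,D}` a fixed order `m k ≤ p`, a string `js k`, and an index tuple `ks k` containing `k`
are chosen whose coefficient `γ_k = c^{(m k)}_{js k}(ks k)` is nonzero.  Then every coefficient
`c^(N)_𝐣(𝐤)`, after multiplication by `∏_i γ_{k_i}`, factors into a product of `N` coefficients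
of orders `≤ 2p−1`, the first and the last of which have orders `≤ p`. -/
theorem coeff_insertion_decomposition {D : ℕ} [NeZero D] {J : Type*}
    (M : J → Matrix (Fin D) (Fin D) ℂ) (p : ℕ) (hp : 2 ≤ p)
    (m : Fin D → ℕ) (js : Fin D → ℕ → J) (ks : Fin D → ℕ → Fin D)
    (hm : ∀ k, m k ≤ p)
    (hcont : ∀ k, ∃ i, i < m k - 1 ∧ ks k i = k)
    (hγ : ∀ k, mpsCoeff M (m k) (js k) (ks k) ≠ 0) :
    ∀ N, 2 ≤ N → ∀ (j : ℕ → J) (kk : ℕ → Fin D),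
      ∃ (ℓ : ℕ → ℕ) (js' : ℕ → ℕ → J) (ks' : ℕ → ℕ → Fin D),
        ℓ 0 ≤ p ∧ ℓ (N - 1) ≤ p ∧ (∀ r, r < N → 2 ≤ ℓ r ∧ ℓ r ≤ 2 * p - 1) ∧
        mpsCoeff M N j kk *
            ∏ i ∈ Finset.range (N - 1), mpsCoeff M (m (kk i)) (js (kk i)) (ks (kk i))
          = ∏ r ∈ Finset.range N, mpsCoeff M (ℓ r) (js' r) (ks' r) := by
  classical
  intro N hN j kk
  choose iF hilt hieq using hcont
  set a : Fin D → ℕ := fun k => iF k + 1 with ha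
  set b : Fin D → ℕ := fun k => m k - a k with hb
  have ha1 : ∀ k, 1 ≤ a k := fun k => Nat.le_add_left 1 _
  have hab : ∀ k, a k < m k := fun k => by have := hilt k; simp only [ha]; omega
  have hb1 : ∀ k, 1 ≤ b k := fun k => by have := hab k; simp only [hb]; omega
  have hap : ∀ k, a k ≤ p - 1 := fun k => by
    have := hab k; have := hm k; omega
  have hbp : ∀ k, b k ≤ p - 1 := fun k => by
    have := hab k; have := hm k; have := ha1 k; simp only [hb]; omega
  set H : Fin D → ℂ := fun k => seg M 0 k (a k) (js k) (ks k) with hH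
  set T : Fin D → ℂ :=
    fun k => seg M k 0 (b k) (fun t => js k (a k + t)) (fun t => ks k (a k + t)) with hT
  have hγHT : ∀ k, mpsCoeff M (m k) (js k) (ks k) = H k * T k := by
    intro k
    rw [mpsCoeff_eq_seg]
    have hc : ks k (a k - 1) = k := by
      rw [show a k - 1 = iF k from by simp only [ha]; omega]; exact hieq k
    rw [seg_split M (Nat.lt_of_lt_of_le Nat.zero_lt_one (ha1 k)) (hab k) hc]
  set L : ℕ → ℕ := fun r =>
    if r = 0 then 1 + b (kk 0)
    else if r = N - 1 then a (kk (r - 1)) + 1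
    else a (kk (r - 1)) + 1 + b (kk r) with hLdef
  set J' : ℕ → ℕ → J := fun r t =>
    if r = 0 then (if t = 0 then j 0 else js (kk 0) (a (kk 0) + (t - 1)))
    else if t < a (kk (r - 1)) then js (kk (r - 1)) t
    else if t = a (kk (r - 1)) then j r
    else js (kk r) (a (kk r) + (t - a (kk (r - 1)) - 1)) with hJdef
  set K' : ℕ → ℕ → Fin D := fun r t =>
    if r = 0 then (if t = 0 then kk 0 else ks (kk 0) (a (kk 0) + (t - 1)))
    else if t < a (kk (r - 1)) then ks (kk (r - 1)) t
    else if t = a (kk (r - 1)) then kk r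
    else ks (kk r) (a (kk r) + (t - a (kk (r - 1)) - 1)) with hKdef
  refine ⟨L, J', K', ?_, ?_, ?_, ?_⟩
  · have := hbp (kk 0)
    simp only [hLdef, if_pos rfl]
    omega
  · have := hap (kk (N - 1 - 1)); have := hbp (kk 0)
    have h0 : ¬ (N - 1 = 0) := by omega
    simp only [hLdef]
    split_ifs <;> omega
  · intro r hr
    have := hap (kk (r - 1)); have := hbp (kk r); have := hbp (kk 0)
    have := ha1 (kk (r - 1)); have := hb1 (kk r); have := hb1 (kk 0)
    simp only [hLdef]
    split_ifs <;> omega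
  · set E : ℕ → ℂ := fun r =>
      M (j r) (if r + 1 = N then 0 else kk r) (if r = 0 then 0 else kk (r - 1)) with hEdef
    have hcN : mpsCoeff M N j kk = ∏ r ∈ Finset.range N, E r := by
      simp only [hEdef, mpsCoeff]
    have key : ∀ r ∈ Finset.range N, mpsCoeff M (L r) (J' r) (K' r)
        = (if r = 0 then 1 else H (kk (r - 1))) * E r * (if r = N - 1 then 1 else T (kk r)) := by
      intro r hr
      simp only [Finset.mem_range] at hr
      by_cases h0 : r = 0
      · subst h0
        have hL : L 0 = 1 + b (kk 0) := by simp [hLdef]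
        have hK0 : K' 0 0 = kk 0 := by simp [hKdef]
        rw [mpsCoeff_eq_seg, hL,
          seg_split M (s := 1) Nat.one_pos (by have := hb1 (kk 0); omega) hK0, seg_one]
        have h2 : seg M (kk 0) 0 (1 + b (kk 0) - 1)
            (fun t => J' 0 (1 + t)) (fun t => K' 0 (1 + t)) = T (kk 0) := by
          rw [show 1 + b (kk 0) - 1 = b (kk 0) by omega]
          simp only [hT]
          refine seg_congr (fun t ht => ?_) (fun t ht => ?_)
          · simp only [hJdef]
            split_ifs <;> first | rfl | omega | (congr 1; omega) | (exfalso; omega)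
          · simp only [hKdef]
            split_ifs <;> first | rfl | omega | (congr 1; omega) | (exfalso; omega)
        rw [h2]
        have hJ00 : J' 0 0 = j 0 := by simp [hJdef]
        rw [hJ00, if_pos rfl, if_neg (by omega : ¬ (0 = N - 1))]
        simp only [hEdef]
        rw [if_neg (by omega : ¬ (0 + 1 = N))]
        simp
      · have hα1 := ha1 (kk (r - 1))
        have hKα : K' r (a (kk (r - 1)) - 1) = kk (r - 1) := by
          simp only [hKdef]
          rw [if_neg h0, if_pos (by omega : a (kk (r - 1)) - 1 < a (kk (r - 1)))]
          rw [show a (kk (r - 1)) - 1 = iF (kk (r - 1)) from by simp only [ha]; omega]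
          exact hieq (kk (r - 1))
        have hfirst : seg M 0 (kk (r - 1)) (a (kk (r - 1))) (J' r) (K' r) = H (kk (r - 1)) := by
          simp only [hH]
          refine seg_congr (fun t ht => ?_) (fun t ht => ?_)
          · simp only [hJdef]; rw [if_neg h0, if_pos ht]
          · simp only [hKdef]; rw [if_neg h0, if_pos (by omega : t < a (kk (r - 1)))]
        by_cases h1 : r = N - 1
        · have hL : L r = a (kk (r - 1)) + 1 := by
            simp only [hLdef]; rw [if_neg h0, if_pos h1]
          rw [mpsCoeff_eq_seg, hL,
            seg_split M (s := a (kk (r - 1))) (by omega) (by omega) hKα, hfirst,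
            show a (kk (r - 1)) + 1 - a (kk (r - 1)) = 1 by omega, seg_one]
          have hJα : J' r (a (kk (r - 1)) + 0) = j r := by
            simp only [hJdef]
            split_ifs <;> first | rfl | omega | (congr 1; omega) | (exfalso; omega)
          rw [hJα, if_neg h0, if_pos h1]
          simp only [hEdef]
          rw [if_pos (by omega : r + 1 = N), if_neg h0]
          ring
        · have hL : L r = a (kk (r - 1)) + 1 + b (kk r) := by
            simp only [hLdef]; rw [if_neg h0, if_neg h1]
          have hβ1 := hb1 (kk r)
          rw [mpsCoeff_eq_seg, hL,
            seg_split M (s := a (kk (r - 1))) (by omega) (by omega) hKα, hfirst,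
            show a (kk (r - 1)) + 1 + b (kk r) - a (kk (r - 1)) = 1 + b (kk r) by omega]
          have hKmid : K' r (a (kk (r - 1)) + 0) = kk r := by
            simp only [hKdef]
            split_ifs <;> first | rfl | omega | (congr 1; omega) | (exfalso; omega)
          rw [seg_split M (s := 1) Nat.one_pos (by omega) hKmid, seg_one]
          have hJα : J' r (a (kk (r - 1)) + 0) = j r := by
            simp only [hJdef]
            split_ifs <;> first | rfl | omega | (congr 1; omega) | (exfalso; omega)
          have h3 : seg M (kk r) 0 (1 + b (kk r) - 1)
              (fun t => J' r (a (kk (r - 1)) + (1 + t)))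
              (fun t => K' r (a (kk (r - 1)) + (1 + t))) = T (kk r) := by
            rw [show 1 + b (kk r) - 1 = b (kk r) by omega]
            simp only [hT]
            refine seg_congr (fun t ht => ?_) (fun t ht => ?_)
            · simp only [hJdef]
              split_ifs <;> first | rfl | omega | (congr 1; omega) | (exfalso; omega)
            · simp only [hKdef]
              split_ifs <;> first | rfl | omega | (congr 1; omega) | (exfalso; omega)
          rw [h3, hJα, if_neg h0, if_neg h1]
          simp only [hEdef]
          rw [if_neg (by omega : ¬ (r + 1 = N)), if_neg h0]
          ring
    rw [hcN, Finset.prod_congr rfl (fun i _ => hγHT (kk i)),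
      Finset.prod_congr rfl key, Finset.prod_mul_distrib, Finset.prod_mul_distrib,
      Finset.prod_mul_distrib]
    have e1 : Finset.range N = Finset.range ((N - 1) + 1) := by
      congr 1; omega
    have hHprod : (∏ r ∈ Finset.range N, if r = 0 then 1 else H (kk (r - 1)))
        = ∏ i ∈ Finset.range (N - 1), H (kk i) := by
      rw [e1, Finset.prod_range_succ']
      simp
    have hTprod : (∏ r ∈ Finset.range N, if r = N - 1 then 1 else T (kk r))
        = ∏ i ∈ Finset.range (N - 1), T (kk i) := by
      rw [e1, Finset.prod_range_succ, if_pos rfl, mul_one]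
      refine Finset.prod_congr rfl fun i hi => ?_
      simp only [Finset.mem_range] at hi
      rw [if_neg (by omega)]
    rw [hHprod, hTprod]
    ring
end
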